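/- arXiv:2403.16317 — 3 statements merged into one kernel-verified Lean document; each statement's English description precedes it below -/
import Mathlib

section
/- Let f: ℝ^d → ℝ be BVG_avg at radius r > 0 with constant L_r and BVG_max at radius 2r with constant L̂_{2r}. Then for all x ∈ ℝ^d, E_{u∼Unif(B)}[‖γ_f(x + r u) − ∇f_r(x)‖₂²] ≤ L_r · L̂_{2r}, where B is the unit Euclidean ball. -/
/-!
Write `h u = ‖γ (x + r • u) - ∇f_r(x)‖`. By Rademacher's theorem and differentiation under the
integral, `∇f_r(x)` is the average of `γ` over the ball of radius `r` about `x`; any two points of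
that ball are `2r` apart at most, so BVG_max at radius `2r` gives `h ≤ L̂_{2r}` on the unit ball,
whence `E[h²] ≤ L̂_{2r} E[h]`. In polar coordinates `E[h]` is an average over radii `ρ < 1` of the
sphere averages of `‖γ (x + (rρ) • σ) - ∇f_r(x)‖`, each at most `L_r` by BVG_avg at radius `rρ ≤ r`.
-/

open MeasureTheory Metric Real Set
open scoped RealInnerProductSpace ENNReal NNReal

noncomputable section

abbrev Eu (d : ℕ) := EuclideanSpace ℝ (Fin d)

/-- The uniform probability measure on a set `s` (normalized restriction of Lebesgue measure). -/
def unifOn {d : ℕ} (s : Set (Eu d)) : Measure (Eu d) :=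
  (volume s)⁻¹ • volume.restrict s

/-- The locally smoothed function `f_r`: the average of `f` over a Euclidean ball of radius `r`. -/
def smoothed {d : ℕ} (f : Eu d → ℝ) (r : ℝ) (x : Eu d) : ℝ :=
  ⨍ u in Metric.closedBall (0 : Eu d) r, f (x + u)

/-- The uniform probability measure on the unit Euclidean sphere. -/
def unifSphere (d : ℕ) : Measure (Metric.sphere (0 : Eu d) 1) :=
  ((volume : Measure (Eu d)).toSphere Set.univ)⁻¹ • (volume : Measure (Eu d)).toSphere

/-- `γ` is a measurable selection of the subdifferential of the locally Lipschitz function `f`: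
it is measurable and agrees with the gradient at every point of differentiability. -/
def IsGradSelection {d : ℕ} (f : Eu d → ℝ) (γ : Eu d → Eu d) : Prop :=
  Measurable γ ∧ ∀ x, DifferentiableAt ℝ f x → γ x = gradient f x

/-- Bounded maximum local variation of the subgradient (BVG_max) at radius `r` with constant `L`. -/
def BVGmax {d : ℕ} (γ : Eu d → Eu d) (r L : ℝ) : Prop :=
  ∀ x : Eu d, ∀ u ∈ Metric.closedBall (0 : Eu d) 1, ‖γ (x + r • u) - γ x‖ ≤ L

/-- Bounded mean local oscillation of the subgradient (BVG_avg) at radius `r` with constant `L`. -/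
def BVGavg {d : ℕ} (f : Eu d → ℝ) (γ : Eu d → Eu d) (r L : ℝ) : Prop :=
  ∀ ρ : ℝ, 0 < ρ → ρ ≤ r → ∀ x : Eu d,
    ∫ u : Metric.sphere (0 : Eu d) 1,
      ‖γ (x + ρ • (u : Eu d)) - gradient (smoothed f r) x‖ ∂(unifSphere d) ≤ L

/-- The Goldstein `δ`-subdifferential of `f` at `x`. -/
def goldstein {d : ℕ} (f : Eu d → ℝ) (δ : ℝ) (x : Eu d) : Set (Eu d) :=
  convexHull ℝ {g | ∃ y ∈ Metric.closedBall x δ, DifferentiableAt ℝ f y ∧ gradient f y = g}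

/-- The mean width of a set `K ⊆ ℝ^d`. -/
def meanWidth {d : ℕ} (K : Set (Eu d)) : ℝ :=
  ∫ u : Metric.sphere (0 : Eu d) 1,
    sSup ((fun p : Eu d × Eu d => ⟪(u : Eu d), p.1 - p.2⟫) '' (K ×ˢ K)) ∂(unifSphere d)

/-- `proj` is the Euclidean projection onto the set `X`. -/
def IsProjOn {d : ℕ} (X : Set (Eu d)) (proj : Eu d → Eu d) : Prop :=
  ∀ z, proj z ∈ X ∧ ∀ w ∈ X, ‖z - proj z‖ ≤ ‖z - w‖

/-- The AGD+ iterate recurrences with step sizes `a` (cumulative sums `A`),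
gradient estimates `g` and projection `proj` onto the feasible set. -/
def AGDPlus {d : ℕ} (proj : Eu d → Eu d) (a A : ℕ → ℝ) (g x y z : ℕ → Eu d) : Prop :=
  (∀ k, A k = ∑ i ∈ Finset.range (k + 1), a i) ∧
  z 0 = x 0 - a 0 • g 0 ∧ y 0 = proj (z 0) ∧
  (∀ k, x (k + 1) = (A k / A (k + 1)) • y k + (a (k + 1) / A (k + 1)) • proj (z k)) ∧
  (∀ k, z (k + 1) = z k - a (k + 1) • g (k + 1)) ∧
  (∀ k, y (k + 1) = (A k / A (k + 1)) • y k + (a (k + 1) / A (k + 1)) • proj (z (k + 1)))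

/-- The bias error term `E_k^b`. -/
def Ebias {d : ℕ} (γ : Eu d → Eu d) (a : ℕ → ℝ) (g x : ℕ → Eu d) (w : Eu d) (k : ℕ) : ℝ :=
  a k * ⟪g k - γ (x k), w - x k⟫

/-- The variance error term `E_k^v`. -/
def Evar {d : ℕ} (γ : Eu d → Eu d) (a : ℕ → ℝ) (g x v : ℕ → Eu d) (k : ℕ) : ℝ :=
  a k * ⟪γ (x k) - g k, v k - x k⟫

/-- The smoothness error term `E_k^s`. -/
def Esmooth {d : ℕ} (f : Eu d → ℝ) (γ : Eu d → Eu d) (a A : ℕ → ℝ) (x y : ℕ → Eu d) (k : ℕ) : ℝ :=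
  A k * (f (y k) - f (x k) - ⟪γ (x k), y k - x k⟫ - (A k / (2 * (a k) ^ 2)) * ‖y k - x k‖ ^ 2)

/-- The gap estimate `G_k`. -/
def gapG {d : ℕ} (f : Eu d → ℝ) (γ : Eu d → Eu d) (a A : ℕ → ℝ) (g x y v : ℕ → Eu d)
    (w : Eu d) (k : ℕ) : ℝ :=
  f (y k) - (A k)⁻¹ * (∑ i ∈ Finset.range (k + 1), a i * (f (x i) + ⟪g i, v k - x i⟫))
    + (A k)⁻¹ * (∑ i ∈ Finset.range (k + 1), Ebias γ a g x w i)
    - (1 / (2 * A k)) * ‖v k - x 0‖ ^ 2 + (1 / (2 * A k)) * ‖w - x 0‖ ^ 2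


section Polar

variable {E : Type*} [NormedAddCommGroup E] [NormedSpace ℝ E] [FiniteDimensional ℝ E]
  [MeasurableSpace E] [BorelSpace E] [Nontrivial E] (μ : Measure E) [μ.IsAddHaarMeasure]

theorem lintegral_eq_lintegral_toSphere_volumeIoiPow {g : E → ℝ≥0∞} (hg : Measurable g) :
    ∫⁻ x, g x ∂μ = ∫⁻ ρ, ∫⁻ σ, g ((ρ : ℝ) • (σ : E)) ∂μ.toSphere
      ∂(Measure.volumeIoiPow (Module.finrank ℝ E - 1)) := by
  have hpolar := Measure.measurePreserving_homeomorphUnitSphereProd μ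
  have hg' : Measurable fun p : sphere (0 : E) 1 × Ioi (0 : ℝ) => g ((p.2 : ℝ) • (p.1 : E)) :=
    hg.comp ((measurable_subtype_coe.comp measurable_snd).smul
      (measurable_subtype_coe.comp measurable_fst))
  calc ∫⁻ x, g x ∂μ = ∫⁻ x : ({0}ᶜ : Set E), g x ∂μ.comap (↑) := by
        rw [lintegral_subtype_comap (measurableSet_singleton 0).compl,
          restrict_compl_singleton]
    _ = ∫⁻ p : sphere (0 : E) 1 × Ioi (0 : ℝ), g ((p.2 : ℝ) • (p.1 : E))
          ∂(μ.toSphere.prod (Measure.volumeIoiPow (Module.finrank ℝ E - 1))) := by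
        rw [← hpolar.lintegral_comp hg']
        congr! with x
        rw [← homeomorphUnitSphereProd_symm_apply_coe, Homeomorph.symm_apply_apply]
    _ = _ := lintegral_prod_symm _ hg'.aemeasurable

theorem setLIntegral_ball_le_of_toSphere_le {g : E → ℝ≥0∞} (hg : Measurable g) {c : ℝ≥0∞}
    (h : ∀ ρ : ℝ, 0 < ρ → ρ < 1 → ∫⁻ σ, g (ρ • (σ : E)) ∂μ.toSphere ≤ μ.toSphere univ * c) :
    ∫⁻ x in ball 0 1, g x ∂μ ≤ μ (ball 0 1) * c := by
  set n := Module.finrank ℝ E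
  set one : Ioi (0 : ℝ) := ⟨1, mem_Ioi.2 one_pos⟩
  have hn : 0 < n := Module.finrank_pos
  have hsphere (ρ : Ioi (0 : ℝ)) :
      ∫⁻ σ, (ball (0 : E) 1).indicator g ((ρ : ℝ) • (σ : E)) ∂μ.toSphere ≤
        (Iio one).indicator (fun _ => μ.toSphere univ * c) ρ := by
    have hnorm (σ : sphere (0 : E) 1) : ‖(ρ : ℝ) • (σ : E)‖ = ρ := by
      simp [norm_smul, abs_of_pos ρ.2.out]
    by_cases hρ : (ρ : ℝ) < 1
    · rw [indicator_of_mem (show ρ ∈ Iio one from hρ)]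
      refine le_of_eq_of_le (lintegral_congr fun σ => ?_) (h ρ ρ.2 hρ)
      rw [indicator_of_mem (by simpa [hnorm] using hρ)]
    · rw [indicator_of_notMem (show ρ ∉ Iio one from hρ)]
      refine (lintegral_congr fun σ => ?_).trans_le lintegral_zero.le
      rw [indicator_of_notMem (by simpa [hnorm] using hρ)]
  have hcast : ((n - 1 : ℕ) : ℝ) + 1 = n := by
    rw [Nat.cast_sub hn, Nat.cast_one, sub_add_cancel]
  calc ∫⁻ x in ball 0 1, g x ∂μ
      = ∫⁻ ρ, ∫⁻ σ, (ball (0 : E) 1).indicator g ((ρ : ℝ) • (σ : E)) ∂μ.toSphere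
          ∂(Measure.volumeIoiPow (n - 1)) := by
        rw [← lintegral_indicator measurableSet_ball,
          lintegral_eq_lintegral_toSphere_volumeIoiPow μ (hg.indicator measurableSet_ball)]
    _ ≤ ∫⁻ ρ, (Iio one).indicator (fun _ => μ.toSphere univ * c) ρ
          ∂(Measure.volumeIoiPow (n - 1)) := lintegral_mono hsphere
    _ = n * μ (ball 0 1) * c * ENNReal.ofReal (n : ℝ)⁻¹ := by
        rw [lintegral_indicator_const measurableSet_Iio, Measure.volumeIoiPow_apply_Iio,
          Measure.toSphere_apply_univ, hcast]
        simp [one, n]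
    _ = μ (ball 0 1) * c * (n * (n : ℝ≥0∞)⁻¹) := by
        rw [ENNReal.ofReal_inv_of_pos (by positivity), ENNReal.ofReal_natCast]
        ring
    _ = μ (ball 0 1) * c := by
        rw [ENNReal.mul_inv_cancel (by positivity) (ENNReal.natCast_ne_top n), mul_one]

end Polar

section Uniform

variable {d : ℕ}

theorem isProbabilityMeasure_unifOn {s : Set (Eu d)} (h0 : volume s ≠ 0) (hT : volume s ≠ ∞) :
    IsProbabilityMeasure (unifOn s) :=
  ⟨by rw [unifOn, Measure.smul_apply, Measure.restrict_apply_univ, smul_eq_mul,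
    ENNReal.inv_mul_cancel h0 hT]⟩

theorem isProbabilityMeasure_unifOn_closedBall (x : Eu d) {r : ℝ} (hr : 0 < r) :
    IsProbabilityMeasure (unifOn (closedBall x r)) :=
  isProbabilityMeasure_unifOn (measure_closedBall_pos volume x hr).ne' measure_closedBall_lt_top.ne

theorem ae_mem_unifOn {s : Set (Eu d)} (hs : MeasurableSet s) : ∀ᵐ u ∂unifOn s, u ∈ s :=
  Measure.ae_smul_measure (ae_restrict_mem hs) _

theorem unifOn_absolutelyContinuous (s : Set (Eu d)) : unifOn s ≪ volume :=
  Measure.smul_absolutelyContinuous.trans Measure.absolutelyContinuous_restrict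

theorem isProbabilityMeasure_unifSphere [Nontrivial (Eu d)] : IsProbabilityMeasure (unifSphere d) :=
  ⟨by rw [unifSphere, Measure.smul_apply, smul_eq_mul, ENNReal.inv_mul_cancel
    (Measure.measure_univ_ne_zero.2 (Measure.toSphere_ne_zero _)) (measure_ne_top _ _)]⟩

theorem integral_unifOn_closedBall_le_of_unifSphere_le [Nontrivial (Eu d)] {g : Eu d → ℝ}
    (hg : Measurable g) (hg0 : ∀ u, 0 ≤ g u) {M : ℝ} (hgM : ∀ u ∈ closedBall (0 : Eu d) 1, g u ≤ M)
    {c : ℝ} (h : ∀ ρ : ℝ, 0 < ρ → ρ < 1 → ∫ σ, g (ρ • (σ : Eu d)) ∂unifSphere d ≤ c) :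
    ∫ u, g u ∂unifOn (closedBall 0 1) ≤ c := by
  have := isProbabilityMeasure_unifSphere (d := d)
  have := isProbabilityMeasure_unifOn_closedBall (0 : Eu d) one_pos
  set S := (volume : Measure (Eu d)).toSphere
  have hS : S univ ≠ 0 := Measure.measure_univ_ne_zero.2 (Measure.toSphere_ne_zero _)
  have hc : 0 ≤ c := (integral_nonneg fun σ => hg0 _).trans (h (1 / 2) (by norm_num) (by norm_num))
  have hsphere (ρ : ℝ) (hρ0 : 0 < ρ) (hρ1 : ρ < 1) :
      ∫⁻ σ, ENNReal.ofReal (g (ρ • (σ : Eu d))) ∂S ≤ S univ * ENNReal.ofReal c := by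
    have hbdd : ∀ σ : sphere (0 : Eu d) 1, ‖g (ρ • (σ : Eu d))‖ ≤ M := fun σ => by
      rw [Real.norm_of_nonneg (hg0 _)]
      exact hgM _ (by simp [norm_smul, abs_of_pos hρ0, hρ1.le])
    have hint : Integrable (fun σ : sphere (0 : Eu d) 1 => g (ρ • (σ : Eu d))) (unifSphere d) :=
      .of_bound (hg.comp (measurable_subtype_coe.const_smul ρ)).aestronglyMeasurable M
        (ae_of_all _ hbdd)
    calc ∫⁻ σ, ENNReal.ofReal (g (ρ • (σ : Eu d))) ∂S
        = S univ * ∫⁻ σ, ENNReal.ofReal (g (ρ • (σ : Eu d))) ∂unifSphere d := by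
          rw [unifSphere, lintegral_smul_measure, smul_eq_mul, ← mul_assoc,
            ENNReal.mul_inv_cancel hS (measure_ne_top _ _), one_mul]
      _ ≤ S univ * ENNReal.ofReal c := by
          rw [← ofReal_integral_eq_lintegral_ofReal hint (ae_of_all _ fun σ => hg0 _)]
          exact mul_le_mul_right (ENNReal.ofReal_le_ofReal (h ρ hρ0 hρ1)) _
  have hint : Integrable g (unifOn (closedBall 0 1)) := by
    refine .of_bound hg.aestronglyMeasurable M ?_
    filter_upwards [ae_mem_unifOn measurableSet_closedBall] with u hu
    rw [Real.norm_of_nonneg (hg0 u)]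
    exact hgM u hu
  have hball : closedBall (0 : Eu d) 1 =ᵐ[volume] ball (0 : Eu d) 1 := by
    refine ae_eq_set.2 ⟨?_, by simp [sdiff_eq_empty.2 ball_subset_closedBall]⟩
    rw [closedBall_sdiff_ball]
    exact Measure.addHaar_sphere volume 0 1
  have hV : volume (ball (0 : Eu d) 1) ≠ 0 := (measure_ball_pos volume 0 one_pos).ne'
  rw [← ENNReal.ofReal_le_ofReal_iff hc,
    ofReal_integral_eq_lintegral_ofReal hint (ae_of_all _ hg0), unifOn, lintegral_smul_measure,
    Measure.restrict_congr_set hball, measure_congr hball, smul_eq_mul]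
  calc (volume (ball (0 : Eu d) 1))⁻¹ * ∫⁻ u in ball 0 1, ENNReal.ofReal (g u)
      ≤ (volume (ball (0 : Eu d) 1))⁻¹ * (volume (ball (0 : Eu d) 1) * ENNReal.ofReal c) :=
        mul_le_mul_right (setLIntegral_ball_le_of_toSphere_le volume
          hg.ennreal_ofReal hsphere) _
    _ = ENNReal.ofReal c := by
        rw [← mul_assoc, ENNReal.inv_mul_cancel hV measure_ball_lt_top.ne, one_mul]

end Uniform

section Smoothing

variable {E : Type*} [NormedAddCommGroup E] [NormedSpace ℝ E] [FiniteDimensional ℝ E]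
  [MeasurableSpace E] [BorelSpace E]

theorem LocallyLipschitz.ae_differentiableAt {F : Type*} [NormedAddCommGroup F] [NormedSpace ℝ F]
    [FiniteDimensional ℝ F] {f : E → F} (hf : LocallyLipschitz f) (μ : Measure E)
    [μ.IsAddHaarMeasure] : ∀ᵐ x ∂μ, DifferentiableAt ℝ f x := by
  have hball (n : ℕ) : ∀ᵐ x ∂μ, x ∈ ball (0 : E) n → DifferentiableAt ℝ f x := by
    obtain ⟨K, hK⟩ := hf.locallyLipschitzOn.exists_lipschitzOnWith_of_compact
      (isCompact_closedBall (0 : E) n)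
    filter_upwards [(hK.mono ball_subset_closedBall).ae_differentiableWithinAt_of_mem (μ := μ)]
      with x hx hxn
    exact (hx hxn).differentiableAt (isOpen_ball.mem_nhds hxn)
  filter_upwards [ae_all_iff.2 hball] with x hx
  obtain ⟨n, hn⟩ := exists_nat_gt ‖x‖
  exact hx n (mem_ball_zero_iff.2 hn)

theorem LocallyLipschitz.hasFDerivAt_integral_comp_add {f : E → ℝ} (hf : LocallyLipschitz f)
    {μ : Measure E} [IsFiniteMeasure μ] {R : ℝ} (hμ : ∀ᵐ u ∂μ, ‖u‖ ≤ R) (x : E)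
    (hdiff : ∀ᵐ u ∂μ, DifferentiableAt ℝ f (x + u)) :
    Integrable (fun u => fderiv ℝ f (x + u)) μ ∧
      HasFDerivAt (fun y => ∫ u, f (y + u) ∂μ) (∫ u, fderiv ℝ f (x + u) ∂μ) x := by
  obtain ⟨K, hK⟩ := hf.locallyLipschitzOn.exists_lipschitzOnWith_of_compact
    (isCompact_closedBall x (R + 1))
  obtain ⟨C, hC⟩ := (isCompact_closedBall x R).exists_bound_of_continuousOn
    hf.continuous.continuousOn
  have hlip : ∀ᵐ u ∂μ, LipschitzOnWith (Real.nnabs K) (fun y => f (y + u)) (ball x 1) := by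
    filter_upwards [hμ] with u hu y hy z hz
    rw [Real.nnabs_coe]
    have hmem (w : E) (hw : w ∈ ball x 1) : w + u ∈ closedBall x (R + 1) := by
      rw [mem_ball, dist_eq_norm] at hw
      rw [mem_closedBall, dist_eq_norm, add_sub_right_comm]
      exact (norm_add_le _ _).trans (by linarith)
    simpa [edist_dist] using hK (hmem y hy) (hmem z hz)
  refine hasFDerivAt_integral_of_dominated_loc_of_lip (ball_mem_nhds x one_pos)
    (.of_forall fun y => (hf.continuous.comp (continuous_const_add y)).aestronglyMeasurable) ?_
    ((measurable_fderiv ℝ f).comp (measurable_const_add x)).aestronglyMeasurable hlip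
    (integrable_const (K : ℝ)) ?_
  · refine .of_bound (hf.continuous.comp (continuous_const_add x)).aestronglyMeasurable C ?_
    filter_upwards [hμ] with u hu
    exact hC _ (add_mem_closedBall_iff_norm.2 hu)
  · filter_upwards [hdiff] with u hu
    exact (hasFDerivAt_comp_add_right u).2 hu.hasFDerivAt

end Smoothing

section Subgradient

variable {d : ℕ} {f : Eu d → ℝ} {γ : Eu d → Eu d} {r : ℝ}

theorem IsGradSelection.integrable_and_gradient_smoothed_eq (hγ : IsGradSelection f γ)
    (hf : LocallyLipschitz f) (hr : 0 < r) (x : Eu d) :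
    Integrable (fun u => γ (x + u)) (unifOn (closedBall 0 r)) ∧
      gradient (smoothed f r) x = ∫ u, γ (x + u) ∂unifOn (closedBall 0 r) := by
  have := isProbabilityMeasure_unifOn_closedBall (0 : Eu d) hr
  set μ := unifOn (closedBall (0 : Eu d) r)
  have hdiff : ∀ᵐ u ∂μ, DifferentiableAt ℝ f (x + u) :=
    (unifOn_absolutelyContinuous _).ae_le <|
      (measurePreserving_add_left volume x).quasiMeasurePreserving.ae
        (hf.ae_differentiableAt volume)
  have hγ_ae : (fun u => gradient f (x + u)) =ᵐ[μ] fun u => γ (x + u) := by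
    filter_upwards [hdiff] with u hu
    exact (hγ.2 _ hu).symm
  have hμ : ∀ᵐ u ∂μ, ‖u‖ ≤ r :=
    (ae_mem_unifOn measurableSet_closedBall).mono fun u hu => mem_closedBall_zero_iff.1 hu
  obtain ⟨hint, hderiv⟩ := hf.hasFDerivAt_integral_comp_add hμ x hdiff
  have hsmoothed : smoothed f r = fun y => ∫ u, f (y + u) ∂μ := by
    ext y
    rw [smoothed, setAverage_eq']
    rfl
  set L := (InnerProductSpace.toDual ℝ (Eu d)).symm.toContinuousLinearEquiv
  refine ⟨((L.integrable_comp_iff).2 hint).congr hγ_ae, ?_⟩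
  calc gradient (smoothed f r) x = L (∫ u, fderiv ℝ f (x + u) ∂μ) := by
        rw [gradient, hsmoothed, hderiv.fderiv]
        rfl
    _ = ∫ u, gradient f (x + u) ∂μ := (L.integral_comp_comm _).symm
    _ = ∫ u, γ (x + u) ∂μ := integral_congr_ae hγ_ae

theorem BVGmax.norm_sub_gradient_smoothed_le {L : ℝ} (hmax : BVGmax γ (2 * r) L)
    (hγ : IsGradSelection f γ) (hf : LocallyLipschitz f) (hr : 0 < r) (x : Eu d) {v : Eu d}
    (hv : ‖v‖ ≤ r) : ‖γ (x + v) - gradient (smoothed f r) x‖ ≤ L := by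
  have := isProbabilityMeasure_unifOn_closedBall (0 : Eu d) hr
  obtain ⟨hint, hgrad⟩ := hγ.integrable_and_gradient_smoothed_eq hf hr x
  have hclose : ∀ᵐ w ∂unifOn (closedBall 0 r), ‖γ (x + v) - γ (x + w)‖ ≤ L := by
    filter_upwards [ae_mem_unifOn measurableSet_closedBall] with w hw
    have h2r : 2 * r ≠ 0 := by positivity
    have hq : (2 * r)⁻¹ • (w - v) ∈ closedBall (0 : Eu d) 1 := by
      rw [mem_closedBall_zero_iff, norm_smul, norm_inv, Real.norm_of_nonneg (by positivity),
        inv_mul_le_one₀ (by positivity)]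
      linarith [norm_sub_le w v, mem_closedBall_zero_iff.1 hw]
    have := hmax (x + v) _ hq
    rwa [smul_inv_smul₀ h2r, add_add_sub_cancel, norm_sub_rev] at this
  calc ‖γ (x + v) - gradient (smoothed f r) x‖
      = ‖∫ w, (γ (x + v) - γ (x + w)) ∂unifOn (closedBall 0 r)‖ := by
        rw [integral_sub (integrable_const _) hint, integral_const, probReal_univ, one_smul, hgrad]
    _ ≤ L := by
        simpa using norm_integral_le_of_norm_le_const hclose

end Subgradient

theorem integral_sq_le_mul_integral_of_ae_le {α : Type*} [MeasurableSpace α] {μ : Measure α}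
    [IsFiniteMeasure μ] {h : α → ℝ} (hm : AEStronglyMeasurable h μ) (h0 : ∀ᵐ a ∂μ, 0 ≤ h a)
    {M : ℝ} (hM : ∀ᵐ a ∂μ, h a ≤ M) : ∫ a, h a ^ 2 ∂μ ≤ M * ∫ a, h a ∂μ := by
  have hint : Integrable h μ := .of_bound hm M <| by
    filter_upwards [h0, hM] with a ha0 haM
    rwa [Real.norm_of_nonneg ha0]
  rw [← integral_const_mul]
  refine integral_mono_of_nonneg (ae_of_all _ fun a => sq_nonneg _) (hint.const_mul M) ?_
  filter_upwards [h0, hM] with a ha0 haM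
  rw [sq]
  exact mul_le_mul_of_nonneg_right haM ha0

/-- variance bound `E_{u∼Unif(B)}[‖γ_f(x + r u) − ∇f_r(x)‖²] ≤ L_r L̂_{2r}`. -/
theorem statement7 (d : ℕ) (f : Eu d → ℝ) (hf : LocallyLipschitz f)
    (γ : Eu d → Eu d) (hγ : IsGradSelection f γ)
    (r Lavg Lmax2 : ℝ) (hr : 0 < r)
    (havg : BVGavg f γ r Lavg) (hmax : BVGmax γ (2 * r) Lmax2) (x : Eu d) :
    ∫ u, ‖γ (x + r • u) - gradient (smoothed f r) x‖ ^ 2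
        ∂(unifOn (Metric.closedBall (0 : Eu d) 1)) ≤ Lavg * Lmax2 := by
  set G := gradient (smoothed f r) x
  have hLavg : 0 ≤ Lavg := (integral_nonneg fun _ => norm_nonneg _).trans (havg r hr le_rfl x)
  have hLmax : 0 ≤ Lmax2 := by simpa using hmax x 0 (mem_closedBall_self zero_le_one)
  rcases subsingleton_or_nontrivial (Eu d) with hE | hE
  · simp only [Subsingleton.elim (γ _ - G) 0, norm_zero, integral_const]
    simpa using mul_nonneg hLavg hLmax
  have := isProbabilityMeasure_unifOn_closedBall (0 : Eu d) one_pos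
  have hmeas : Measurable fun u : Eu d => ‖γ (x + r • u) - G‖ := by
    have := hγ.1
    fun_prop
  have hbound (u : Eu d) (hu : u ∈ closedBall 0 1) : ‖γ (x + r • u) - G‖ ≤ Lmax2 := by
    refine hmax.norm_sub_gradient_smoothed_le hγ hf hr x ?_
    rw [norm_smul, Real.norm_of_nonneg hr.le]
    exact mul_le_of_le_one_right hr.le (mem_closedBall_zero_iff.1 hu)
  have hmean : ∫ u, ‖γ (x + r • u) - G‖ ∂unifOn (closedBall 0 1) ≤ Lavg :=
    integral_unifOn_closedBall_le_of_unifSphere_le hmeas (fun _ => norm_nonneg _) hbound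
      fun ρ hρ0 hρ1 => by
        simpa only [smul_smul] using havg (r * ρ) (by positivity) (by nlinarith) x
  calc _ ≤ Lmax2 * ∫ u, ‖γ (x + r • u) - G‖ ∂unifOn (closedBall 0 1) :=
        integral_sq_le_mul_integral_of_ae_le hmeas.aestronglyMeasurable
          (ae_of_all _ fun _ => norm_nonneg _)
          ((ae_mem_unifOn measurableSet_closedBall).mono hbound)
    _ ≤ Lmax2 * Lavg := by gcongr
    _ = Lavg * Lmax2 := mul_comm _ _

end
end

section
/- Let f: ℝ^d → ℝ be a proper convex continuous function, let x_i, y_i, z_i for i ≥ 0 be the iterates of AGD+, and let w ∈ 𝒳 be arbitrary. Then for all k ≥ 0, f(y_k) − f(w) ≤ G_k, where G_k := f(y_k) − (1/A_k) Σ_{i=0}^k a_i (f(x_i) + ⟨g_i, v_k − x_i⟩) + (1/A_k) Σ_{i=0}^k E_i^b − (1/(2A_k)) ‖v_k − x_0‖₂² + (1/(2A_k)) ‖w − x_0‖₂². -/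
open MeasureTheory Metric Real Set
open scoped RealInnerProductSpace ENNReal NNReal

noncomputable section

/- Unrolling the dual recursion gives `x₀ - z_k = ∑ a_i g_i`, so the linear part of the averaged
lower model, tested against `w`, is `⟪x₀ - z_k, v_k - w⟫`. The three-point identity for the
projection `v_k` of `z_k` bounds this term plus `½‖v_k - x₀‖²` by `½‖w - x₀‖²`, and the
subgradient inequality at each `x_i` bounds the remaining sum by `A_k f(w)`. -/

lemma IsProjOn.inner_sub_proj_le_zero {d : ℕ} {X : Set (Eu d)} {proj : Eu d → Eu d}
    (hproj : IsProjOn X proj) (hX : Convex ℝ X) (z : Eu d) {w : Eu d} (hw : w ∈ X) :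
    ⟪z - proj z, w - proj z⟫ ≤ 0 := by
  obtain ⟨hmem, hmin⟩ := hproj z
  refine (norm_eq_iInf_iff_real_inner_le_zero hX hmem).mp ?_ w hw
  have : Nonempty X := ⟨⟨proj z, hmem⟩⟩
  exact le_antisymm (le_ciInf fun ⟨w, hw⟩ => hmin w hw)
    (ciInf_le ⟨0, fun _ ⟨_, h⟩ => h ▸ norm_nonneg _⟩ (⟨proj z, hmem⟩ : X))

lemma inner_sub_add_half_sq_le_of_inner_le_zero {E : Type*} [NormedAddCommGroup E]
    [InnerProductSpace ℝ E] {x₀ z v w : E} (h : ⟪z - v, w - v⟫ ≤ 0) :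
    ⟪x₀ - z, v - w⟫ + ‖v - x₀‖ ^ 2 / 2 ≤ ‖w - x₀‖ ^ 2 / 2 := by
  have three_point : ⟪x₀ - z, v - w⟫ + ‖v - x₀‖ ^ 2 / 2 - ‖w - x₀‖ ^ 2 / 2
      = ⟪z - v, w - v⟫ - ‖w - v‖ ^ 2 / 2 := by
    simp only [← real_inner_self_eq_norm_sq, inner_sub_left, inner_sub_right,
      real_inner_comm x₀, real_inner_comm v w, real_inner_comm v z, real_inner_comm w z]
    ring
  nlinarith [sq_nonneg ‖w - v‖]

namespace AGDPlus

variable {d : ℕ} {proj : Eu d → Eu d} {a A : ℕ → ℝ} {g x y z : ℕ → Eu d}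

lemma sub_dual_eq_sum (h : AGDPlus proj a A g x y z) (n : ℕ) :
    x 0 - z n = ∑ i ∈ Finset.range (n + 1), a i • g i := by
  obtain ⟨-, hz0, -, -, hz, -⟩ := h
  induction n with
  | zero => simp [hz0]
  | succ n ih => rw [hz n, Finset.sum_range_succ, ← ih]; abel

lemma weight_pos (h : AGDPlus proj a A g x y z) (ha : ∀ k, 0 < a k) (k : ℕ) : 0 < A k := by
  rw [h.1 k]
  exact Finset.sum_pos (fun i _ => ha i) Finset.nonempty_range_add_one

end AGDPlus

lemma sum_model_sub_sum_Ebias {d : ℕ} (γ : Eu d → Eu d) (f : Eu d → ℝ) (a : ℕ → ℝ)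
    (g x : ℕ → Eu d) (v w : Eu d) (s : Finset ℕ) :
    ∑ i ∈ s, a i * (f (x i) + ⟪g i, v - x i⟫) - ∑ i ∈ s, Ebias γ a g x w i
      = ∑ i ∈ s, a i * (f (x i) + ⟪γ (x i), w - x i⟫) + ⟪∑ i ∈ s, a i • g i, v - w⟫ := by
  rw [sum_inner, ← Finset.sum_sub_distrib, ← Finset.sum_add_distrib]
  refine Finset.sum_congr rfl fun i _ => ?_
  simp only [Ebias, real_inner_smul_left, inner_sub_left, inner_sub_right]
  ring

lemma sum_subgradient_model_le {d : ℕ} {f : Eu d → ℝ} {γ : Eu d → Eu d}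
    (hsub : ∀ x y : Eu d, f x + ⟪γ x, y - x⟫ ≤ f y) {a : ℕ → ℝ} (ha : ∀ k, 0 ≤ a k)
    (x : ℕ → Eu d) (w : Eu d) (s : Finset ℕ) :
    ∑ i ∈ s, a i * (f (x i) + ⟪γ (x i), w - x i⟫) ≤ (∑ i ∈ s, a i) * f w := by
  rw [Finset.sum_mul]
  exact Finset.sum_le_sum fun i _ => mul_le_mul_of_nonneg_left (hsub (x i) w) (ha i)

lemma AGDPlus.sum_model_sub_sum_Ebias_le {d : ℕ} {f : Eu d → ℝ} {γ : Eu d → Eu d}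
    (hsub : ∀ x y : Eu d, f x + ⟪γ x, y - x⟫ ≤ f y) {X : Set (Eu d)} (hX : Convex ℝ X)
    {proj : Eu d → Eu d} (hproj : IsProjOn X proj) {a A : ℕ → ℝ} (ha : ∀ k, 0 < a k)
    {g x y z : ℕ → Eu d} (hAGD : AGDPlus proj a A g x y z) {w : Eu d} (hw : w ∈ X) (k : ℕ) :
    ∑ i ∈ Finset.range (k + 1), a i * (f (x i) + ⟪g i, proj (z k) - x i⟫)
        - ∑ i ∈ Finset.range (k + 1), Ebias γ a g x w i
        + ‖proj (z k) - x 0‖ ^ 2 / 2 - ‖w - x 0‖ ^ 2 / 2 ≤ A k * f w := by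
  have hmodel := sum_model_sub_sum_Ebias γ f a g x (proj (z k)) w (Finset.range (k + 1))
  rw [← hAGD.sub_dual_eq_sum] at hmodel
  have hsubgrad := sum_subgradient_model_le hsub (fun i => (ha i).le) x w (Finset.range (k + 1))
  rw [← hAGD.1 k] at hsubgrad
  have hproj_step := inner_sub_add_half_sq_le_of_inner_le_zero (x₀ := x 0)
    (hproj.inner_sub_proj_le_zero hX (z k) hw)
  linarith

theorem statement8_general (d : ℕ) (f : Eu d → ℝ)
    (γ : Eu d → Eu d) (hsub : ∀ x y : Eu d, f x + ⟪γ x, y - x⟫ ≤ f y)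
    (X : Set (Eu d)) (hXcx : Convex ℝ X)
    (proj : Eu d → Eu d) (hproj : IsProjOn X proj)
    (a A : ℕ → ℝ) (ha : ∀ k, 0 < a k)
    (g x y z : ℕ → Eu d)
    (hAGD : AGDPlus proj a A g x y z)
    (w : Eu d) (hw : w ∈ X) (k : ℕ) :
    f (y k) - f w ≤ gapG f γ a A g x y (fun i => proj (z i)) w k := by
  have hA := hAGD.weight_pos ha k
  have key := hAGD.sum_model_sub_sum_Ebias_le hsub hXcx hproj ha hw k
  rw [← inv_mul_le_iff₀ hA] at key
  have h2A : 1 / (2 * A k) = (A k)⁻¹ / 2 := by field_simp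
  rw [gapG, h2A]
  linarith

/-- the gap estimate `G_k` upper bounds `f(y_k) - f(w)` for AGD+. -/
theorem statement8 (d : ℕ) (f : Eu d → ℝ) (hconv : ConvexOn ℝ Set.univ f)
    (hcont : Continuous f)
    (γ : Eu d → Eu d) (hsub : ∀ x y : Eu d, f x + ⟪γ x, y - x⟫ ≤ f y)
    (X : Set (Eu d)) (hXne : X.Nonempty) (hXcl : IsClosed X) (hXcx : Convex ℝ X)
    (proj : Eu d → Eu d) (hproj : IsProjOn X proj)
    (a A : ℕ → ℝ) (ha : ∀ k, 0 < a k)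
    (g x y z : ℕ → Eu d) (hx0 : x 0 ∈ X)
    (hAGD : AGDPlus proj a A g x y z)
    (w : Eu d) (hw : w ∈ X) (k : ℕ) :
    f (y k) - f w ≤ gapG f γ a A g x y (fun i => proj (z i)) w k :=
  statement8_general d f γ hsub X hXcx proj hproj a A ha g x y z hAGD w hw k
end
end

section
/- Let f: ℝ^d → ℝ be a proper convex continuous function and consider the iterates of AGD+ for k ≥ 0 for arbitrary w ∈ 𝒳. Then A_0 G_0 ≤ (1/2)‖w − x_0‖₂² + E_0, and A_k G_k − A_{k−1} G_{k−1} ≤ E_k for all k ≥ 1. As a consequence, for all k ≥ 0, f(y_k) − f(w) ≤ ((1/2)‖w − x_0‖₂² + Σ_{i=0}^k E_i) / A_k. -/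
open MeasureTheory Metric Real Set
open scoped RealInnerProductSpace ENNReal NNReal

noncomputable section

lemma proj_vi {d : ℕ} {X : Set (Eu d)} (hXcx : Convex ℝ X)
    {proj : Eu d → Eu d} (hproj : IsProjOn X proj) (z : Eu d) {u : Eu d} (hu : u ∈ X) :
    ⟪z - proj z, u - proj z⟫ ≤ 0 := by
  set v := proj z with hv
  have hkey : ∀ t : ℝ, 0 < t → t ≤ 1 → 2 * ⟪z - v, u - v⟫ ≤ t * ‖u - v‖ ^ 2 := by
    intro t ht ht1
    have hmem : (1 - t) • v + t • u ∈ X := hXcx (hproj z).1 hu (by linarith) ht.le (by ring)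
    have hle : ‖z - v‖ ≤ ‖z - ((1 - t) • v + t • u)‖ := (hproj z).2 _ hmem
    have hsq : ‖z - v‖ ^ 2 ≤ ‖z - ((1 - t) • v + t • u)‖ ^ 2 :=
      pow_le_pow_left₀ (norm_nonneg _) hle 2
    have hrw : z - ((1 - t) • v + t • u) = (z - v) - t • (u - v) := by module
    rw [hrw, norm_sub_sq_real (z - v) (t • (u - v)), real_inner_smul_right, norm_smul] at hsq
    rw [Real.norm_eq_abs, abs_of_pos ht, mul_pow] at hsq
    nlinarith [sq_nonneg t, norm_nonneg (u - v)]
  have h2 : 2 * ⟪z - v, u - v⟫ ≤ 0 := by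
    by_contra h
    push_neg at h
    set c := 2 * ⟪z - v, u - v⟫ with hc
    set M := ‖u - v‖ ^ 2 with hM
    have hM0 : 0 ≤ M := sq_nonneg _
    have ht : 0 < min 1 (c / (M + 1)) := lt_min one_pos (by positivity)
    have h1 := hkey _ ht (min_le_left _ _)
    have h2 : min 1 (c / (M + 1)) * M ≤ (c / (M + 1)) * M :=
      mul_le_mul_of_nonneg_right (min_le_right _ _) hM0
    have h3 : (c / (M + 1)) * M < c := by
      rw [div_mul_eq_mul_div, div_lt_iff₀ (by linarith)]
      nlinarith
    linarith
  linarith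

set_option maxHeartbeats 4000000 in
/-- the error terms control the growth of `A_k G_k`, and hence the
optimality gap of AGD+. -/
theorem statement9 (d : ℕ) (f : Eu d → ℝ) (hconv : ConvexOn ℝ Set.univ f)
    (hcont : Continuous f)
    (γ : Eu d → Eu d) (hsub : ∀ x y : Eu d, f x + ⟪γ x, y - x⟫ ≤ f y)
    (X : Set (Eu d)) (hXne : X.Nonempty) (hXcl : IsClosed X) (hXcx : Convex ℝ X)
    (proj : Eu d → Eu d) (hproj : IsProjOn X proj)
    (a A : ℕ → ℝ) (ha : ∀ k, 0 < a k)
    (g x y z : ℕ → Eu d) (hx0 : x 0 ∈ X)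
    (hAGD : AGDPlus proj a A g x y z)
    (w : Eu d) (hw : w ∈ X) :
    A 0 * gapG f γ a A g x y (fun i => proj (z i)) w 0
        ≤ (1 / 2) * ‖w - x 0‖ ^ 2 +
          (Esmooth f γ a A x y 0 + Ebias γ a g x w 0 + Evar γ a g x (fun i => proj (z i)) 0) ∧
    (∀ k : ℕ,
      A (k + 1) * gapG f γ a A g x y (fun i => proj (z i)) w (k + 1)
          - A k * gapG f γ a A g x y (fun i => proj (z i)) w k
        ≤ Esmooth f γ a A x y (k + 1) + Ebias γ a g x w (k + 1)
            + Evar γ a g x (fun i => proj (z i)) (k + 1)) ∧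
    (∀ k : ℕ,
      f (y k) - f w ≤
        ((1 / 2) * ‖w - x 0‖ ^ 2 + ∑ i ∈ Finset.range (k + 1),
          (Esmooth f γ a A x y i + Ebias γ a g x w i
            + Evar γ a g x (fun j => proj (z j)) i)) / A k) := by
  obtain ⟨hA, hz0, hy0, hx, hz, hy⟩ := hAGD
  set v : ℕ → Eu d := (fun i => proj (z i)) with hvdef
  have hvX : ∀ k, v k ∈ X := fun k => (hproj (z k)).1
  have hApos : ∀ k, 0 < A k := by
    intro k
    rw [hA]
    exact Finset.sum_pos (fun i _ => ha i) Finset.nonempty_range_add_one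
  have hx' : ∀ k, x (k + 1) = (A k / A (k + 1)) • y k + (a (k + 1) / A (k + 1)) • v k := hx
  have hy' : ∀ k, y (k + 1) = (A k / A (k + 1)) • y k + (a (k + 1) / A (k + 1)) • v (k + 1) := hy
  have hy0v : y 0 = v 0 := hy0
  have hzsum : ∀ k, z k = x 0 - ∑ i ∈ Finset.range (k + 1), a i • g i := by
    intro k
    induction k with
    | zero => rw [hz0]; simp
    | succ n ih => rw [hz n, ih, Finset.sum_range_succ (fun i => a i • g i) (n + 1)]; abel
  have hzin : ∀ k, ∀ u : Eu d, ⟪x 0 - z k, u⟫ = ∑ i ∈ Finset.range (k + 1), a i * ⟪g i, u⟫ := by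
    intro k u
    rw [hzsum k]
    have h : x 0 - (x 0 - ∑ i ∈ Finset.range (k + 1), a i • g i)
        = ∑ i ∈ Finset.range (k + 1), a i • g i := by abel
    rw [h, sum_inner]
    exact Finset.sum_congr rfl fun i _ => real_inner_smul_left _ _ _
  have hVI : ∀ k, ∀ u ∈ X, ⟪z k - v k, u - v k⟫ ≤ 0 := fun k u hu => proj_vi hXcx hproj (z k) hu
  have hexp : ∀ k, A k * gapG f γ a A g x y v w k
      = A k * f (y k) - (∑ i ∈ Finset.range (k + 1), a i * (f (x i) + ⟪g i, v k - x i⟫))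
        + (∑ i ∈ Finset.range (k + 1), Ebias γ a g x w i)
        - (1 / 2) * ‖v k - x 0‖ ^ 2 + (1 / 2) * ‖w - x 0‖ ^ 2 := by
    intro k
    have hk := (hApos k).ne'
    simp only [gapG]
    field_simp
  have part1 : A 0 * gapG f γ a A g x y v w 0
      ≤ (1 / 2) * ‖w - x 0‖ ^ 2
        + (Esmooth f γ a A x y 0 + Ebias γ a g x w 0 + Evar γ a g x v 0) := by
    have hA0 : A 0 = a 0 := by rw [hA]; simp
    have ha0 := (ha 0).ne'
    rw [hexp 0]
    simp only [Finset.sum_range_one, Esmooth, Evar, hA0, hy0v, inner_sub_left]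
    apply le_of_eq
    field_simp
    rw [Finset.sum_range_one, Finset.sum_range_one]
    ring
  have part2 : ∀ k : ℕ, A (k + 1) * gapG f γ a A g x y v w (k + 1)
        - A k * gapG f γ a A g x y v w k
      ≤ Esmooth f γ a A x y (k + 1) + Ebias γ a g x w (k + 1) + Evar γ a g x v (k + 1) := by
    intro k
    have hA1 : A (k + 1) = A k + a (k + 1) := by rw [hA, hA, Finset.sum_range_succ]
    have hAk := hApos k
    have hAk1 := hApos (k + 1)
    have ha1 := ha (k + 1)
    have hyx : y (k + 1) - x (k + 1) = (a (k + 1) / A (k + 1)) • (v (k + 1) - v k) := by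
      rw [hy' k, hx' k]; module
    have hnorm : ‖y (k + 1) - x (k + 1)‖ ^ 2
        = (a (k + 1) / A (k + 1)) ^ 2 * ‖v (k + 1) - v k‖ ^ 2 := by
      rw [hyx, norm_smul, Real.norm_eq_abs, mul_pow, sq_abs]
    have hc1 : A (k + 1) * (A k / A (k + 1)) = A k := by field_simp
    have hc2 : A (k + 1) * (a (k + 1) / A (k + 1)) = a (k + 1) := by field_simp
    have hmul : A (k + 1) • x (k + 1) = A k • y k + a (k + 1) • v k := by
      rw [hx' k, smul_add, smul_smul, smul_smul, hc1, hc2]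
    have hxv : a (k + 1) • (x (k + 1) - v k) = A k • (y k - x (k + 1)) := by
      have h := hmul
      rw [hA1] at h
      have h2 : a (k + 1) • (x (k + 1) - v k)
          = ((A k + a (k + 1)) • x (k + 1) - A k • x (k + 1)) - a (k + 1) • v k := by module
      rw [h2, h]; module
    have hinner1 : a (k + 1) * ⟪γ (x (k + 1)), x (k + 1) - v k⟫
        = A k * ⟪γ (x (k + 1)), y k - x (k + 1)⟫ := by
      rw [← real_inner_smul_right, ← real_inner_smul_right, hxv]
    have hrel : ⟪γ (x (k + 1)), v (k + 1) - v k⟫ - ⟪γ (x (k + 1)), v (k + 1) - x (k + 1)⟫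
        = ⟪γ (x (k + 1)), x (k + 1) - v k⟫ := by
      rw [← inner_sub_right]
      congr 1
      abel
    have hkey : a (k + 1) * ⟪γ (x (k + 1)), v (k + 1) - v k⟫
          - a (k + 1) * ⟪γ (x (k + 1)), v (k + 1) - x (k + 1)⟫
        = A k * ⟪γ (x (k + 1)), y k - x (k + 1)⟫ := by
      rw [← mul_sub, hrel]; exact hinner1
    have hsubk : A k * (f (x (k + 1)) + ⟪γ (x (k + 1)), y k - x (k + 1)⟫) ≤ A k * f (y k) :=
      mul_le_mul_of_nonneg_left (hsub _ _) hAk.le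
    have hVIk : ⟪z k - v k, v (k + 1) - v k⟫ ≤ 0 := hVI k (v (k + 1)) (hvX (k + 1))
    have hquad : ‖v (k + 1) - x 0‖ ^ 2
        = ‖v k - x 0‖ ^ 2 + 2 * ⟪v k - x 0, v (k + 1) - v k⟫ + ‖v (k + 1) - v k‖ ^ 2 := by
      have h : v (k + 1) - x 0 = (v k - x 0) + (v (k + 1) - v k) := by abel
      rw [h, norm_add_sq_real]
    have hlin : ⟪x 0 - z k, v (k + 1) - v k⟫ + ⟪v k - x 0, v (k + 1) - v k⟫
        + ⟪z k - v k, v (k + 1) - v k⟫ = 0 := by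
      rw [← inner_add_left, ← inner_add_left]
      have h : (x 0 - z k) + (v k - x 0) + (z k - v k) = (0 : Eu d) := by abel
      rw [h, inner_zero_left]
    have hsumdiff : (∑ i ∈ Finset.range (k + 1 + 1), a i * (f (x i) + ⟪g i, v (k + 1) - x i⟫))
        = (∑ i ∈ Finset.range (k + 1), a i * (f (x i) + ⟪g i, v k - x i⟫))
          + ⟪x 0 - z k, v (k + 1) - v k⟫
          + a (k + 1) * (f (x (k + 1)) + ⟪g (k + 1), v (k + 1) - x (k + 1)⟫) := by
      rw [Finset.sum_range_succ, hzin k]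
      congr 1
      rw [← Finset.sum_add_distrib]
      refine Finset.sum_congr rfl fun i _ => ?_
      have h : v (k + 1) - x i = (v k - x i) + (v (k + 1) - v k) := by abel
      rw [h, inner_add_right]
      ring
    have hEs : Esmooth f γ a A x y (k + 1)
        = A (k + 1) * f (y (k + 1)) - A (k + 1) * f (x (k + 1))
          - a (k + 1) * ⟪γ (x (k + 1)), v (k + 1) - v k⟫
          - (1 / 2) * ‖v (k + 1) - v k‖ ^ 2 := by
      simp only [Esmooth]
      rw [hnorm, hyx, real_inner_smul_right]
      field_simp
    have hEv : Evar γ a g x v (k + 1)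
        = a (k + 1) * ⟪γ (x (k + 1)), v (k + 1) - x (k + 1)⟫
          - a (k + 1) * ⟪g (k + 1), v (k + 1) - x (k + 1)⟫ := by
      simp only [Evar, inner_sub_left]; ring
    have hfx : A (k + 1) * f (x (k + 1)) = A k * f (x (k + 1)) + a (k + 1) * f (x (k + 1)) := by
      rw [hA1]; ring
    rw [hexp (k + 1), hexp k, hsumdiff,
      Finset.sum_range_succ (fun i => Ebias γ a g x w i) (k + 1), hEs, hEv]
    linarith [hsubk, hVIk, hquad, hlin, hkey, hfx]
  have part3bound : ∀ k, A k * gapG f γ a A g x y v w k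
      ≤ (1 / 2) * ‖w - x 0‖ ^ 2 + ∑ i ∈ Finset.range (k + 1),
          (Esmooth f γ a A x y i + Ebias γ a g x w i + Evar γ a g x v i) := by
    intro k
    induction k with
    | zero => simpa using part1
    | succ n ih =>
      rw [Finset.sum_range_succ]
      have h := part2 n
      linarith
  have hGlb : ∀ k, f (y k) - f w ≤ gapG f γ a A g x y v w k := by
    intro k
    have hAk := hApos k
    have hmin : (∑ i ∈ Finset.range (k + 1), a i * ⟪g i, v k - x i⟫) + 1 / 2 * ‖v k - x 0‖ ^ 2
        ≤ (∑ i ∈ Finset.range (k + 1), a i * ⟪g i, w - x i⟫) + 1 / 2 * ‖w - x 0‖ ^ 2 := by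
      have h1 : ⟪z k - v k, w - v k⟫ ≤ 0 := hVI k w hw
      have h2 := hzin k (w - v k)
      have h3 : ‖w - x 0‖ ^ 2 = ‖v k - x 0‖ ^ 2 + 2 * ⟪v k - x 0, w - v k⟫ + ‖w - v k‖ ^ 2 := by
        have h : w - x 0 = (v k - x 0) + (w - v k) := by abel
        rw [h, norm_add_sq_real]
      have h4 : (∑ i ∈ Finset.range (k + 1), a i * ⟪g i, w - x i⟫)
          = (∑ i ∈ Finset.range (k + 1), a i * ⟪g i, v k - x i⟫)
            + ∑ i ∈ Finset.range (k + 1), a i * ⟪g i, w - v k⟫ := by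
        rw [← Finset.sum_add_distrib]
        refine Finset.sum_congr rfl fun i _ => ?_
        have h : w - x i = (v k - x i) + (w - v k) := by abel
        rw [h, inner_add_right]; ring
      have h5 : ⟪x 0 - z k, w - v k⟫ + ⟪v k - x 0, w - v k⟫ + ⟪z k - v k, w - v k⟫ = 0 := by
        rw [← inner_add_left, ← inner_add_left]
        have h : (x 0 - z k) + (v k - x 0) + (z k - v k) = (0 : Eu d) := by abel
        rw [h, inner_zero_left]
      linarith [sq_nonneg ‖w - v k‖]
    have hsg : (∑ i ∈ Finset.range (k + 1),
          (a i * (f (x i) + ⟪g i, w - x i⟫) - Ebias γ a g x w i)) ≤ A k * f w := by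
      rw [hA, Finset.sum_mul]
      refine Finset.sum_le_sum fun i _ => ?_
      simp only [Ebias, inner_sub_left]
      have h := mul_le_mul_of_nonneg_left (hsub (x i) w) (ha i).le
      linarith
    have hsg' : (∑ i ∈ Finset.range (k + 1), a i * (f (x i) + ⟪g i, w - x i⟫))
        - (∑ i ∈ Finset.range (k + 1), Ebias γ a g x w i) ≤ A k * f w := by
      rw [← Finset.sum_sub_distrib]; exact hsg
    have hsplit : (∑ i ∈ Finset.range (k + 1), a i * (f (x i) + ⟪g i, v k - x i⟫))
        = (∑ i ∈ Finset.range (k + 1), a i * f (x i))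
          + ∑ i ∈ Finset.range (k + 1), a i * ⟪g i, v k - x i⟫ := by
      rw [← Finset.sum_add_distrib]; exact Finset.sum_congr rfl fun i _ => by ring
    have hsplit2 : (∑ i ∈ Finset.range (k + 1), a i * (f (x i) + ⟪g i, w - x i⟫))
        = (∑ i ∈ Finset.range (k + 1), a i * f (x i))
          + ∑ i ∈ Finset.range (k + 1), a i * ⟪g i, w - x i⟫ := by
      rw [← Finset.sum_add_distrib]; exact Finset.sum_congr rfl fun i _ => by ring
    have hmain : A k * (f (y k) - f w) ≤ A k * gapG f γ a A g x y v w k := by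
      rw [hexp k, hsplit]
      rw [hsplit2] at hsg'
      linarith
    exact le_of_mul_le_mul_left hmain hAk
  refine ⟨part1, part2, fun k => ?_⟩
  have hAk := hApos k
  rw [le_div_iff₀ hAk]
  have h1 := mul_le_mul_of_nonneg_right (hGlb k) hAk.le
  have h2 := part3bound k
  linarith

end
end
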